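/- Let Q_t be a continuous family of quadratic forms on R^(ℓ+1) parametrized by a topological space T, such that index(Q_t) = j for all t ∈ T. Then the map t ↦ L_j⁺(Q_t), assigning to t the (ℓ+1−j)-dimensional sum of nonnegative eigenspaces of Q_t, is continuous as a map T → Gr(ℓ+1−j, ℓ+1). -/

import Mathlib

/-!
Diagonalize every `A t` in an orthonormal eigenbasis. Then `L⁺` is spanned by the eigenvectors
with nonnegative eigenvalue, and the index is the number of negative eigenvalues, since a
negative definite subspace meets `L⁺` trivially; this gives the dimension.

For continuity at `t₀`, let `a < 0` bound the negative eigenvalues of `A t₀`. If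
`‖A t - A t₀‖ < -a/2`, the same dimension count (a min-max argument) shows that at least `j`
eigenvalues of `A t` are `≤ a/2`; since `A t` also has index `j`, the spectral gap `(a/2, 0)`
persists. Across the gap, eigenvectors `u` of `A t` and `v` of `A t₀` with eigenvalues `λ`, `μ`
satisfy `|λ - μ| |⟪u, v⟫| ≤ ‖A t - A t₀‖`, so the cross terms of the two projections onto `L⁺`
are `O(‖A t - A t₀‖)`: the projection is locally Lipschitz in `A t`.
-/

open scoped BigOperators RealInnerProductSpace

noncomputable section

/-- The index of the quadratic form `y ↦ ⟪f y, y⟫` of an operator `f` on `ℝ^(ℓ+1)`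
(for `f` self-adjoint, the number of negative eigenvalues): the largest dimension of a
subspace on which the quadratic form is negative definite. -/
def opIndex {ℓ : ℕ} (f : EuclideanSpace ℝ (Fin (ℓ + 1)) →L[ℝ] EuclideanSpace ℝ (Fin (ℓ + 1))) :
    ℕ :=
  sSup {d | ∃ L : Submodule ℝ (EuclideanSpace ℝ (Fin (ℓ + 1))),
    Module.finrank ℝ L = d ∧ ∀ y ∈ L, y ≠ 0 → ⟪f y, y⟫ < 0}

open Finset Submodule Module

theorem exists_neg_forall_le_of_neg {ι : Type*} [Finite ι] (μ : ι → ℝ) :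
    ∃ a < 0, ∀ i, μ i < 0 → μ i ≤ a := by
  have h : ∀ᶠ a in nhdsWithin (0 : ℝ) (Set.Iio 0), a < 0 ∧ ∀ i, μ i < 0 → μ i ≤ a := by
    refine eventually_mem_nhdsWithin.and (Filter.eventually_all.2 fun i => ?_)
    by_cases hi : μ i < 0
    · filter_upwards [nhdsWithin_le_nhds (Ioi_mem_nhds hi)] with a ha _ using le_of_lt ha
    · exact Filter.Eventually.of_forall fun _ h => absurd h hi
  exact h.exists

namespace OrthonormalBasis

variable {ι E : Type*} [Fintype ι] [NormedAddCommGroup E] [InnerProductSpace ℝ E]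
  (b : OrthonormalBasis ι ℝ E) (s : Finset ι)

theorem mem_span_image_iff {x : E} :
    x ∈ span ℝ (b '' s) ↔ ∀ i ∉ s, ⟪b i, x⟫ = 0 := by
  classical
  constructor
  · intro hx i hi
    have hle : span ℝ (b '' s) ≤ (ℝ ∙ b i)ᗮ := by
      rw [span_le]
      rintro _ ⟨k, hk, rfl⟩
      rw [SetLike.mem_coe, mem_orthogonal_singleton_iff_inner_right, b.inner_eq_ite,
        if_neg (by rintro rfl; exact hi hk)]
    exact mem_orthogonal_singleton_iff_inner_right.mp (hle hx)
  · intro h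
    rw [← b.sum_repr' x, ← sum_subset (subset_univ s) fun i _ hi => by rw [h i hi, zero_smul]]
    exact sum_mem fun i hi => smul_mem _ _ (subset_span ⟨i, hi, rfl⟩)

theorem finrank_span_image : finrank ℝ (span ℝ (b '' s)) = #s := by
  classical
  rw [← coe_image, finrank_eq_card_basis (OrthonormalBasis.span b.orthonormal s).toBasis,
    Fintype.card_coe]

theorem starProjection_span_image_apply [FiniteDimensional ℝ E] (x : E) :
    (span ℝ (b '' s)).starProjection x = ∑ i ∈ s, ⟪b i, x⟫ • b i := by
  classical
  simp_rw [← coe_image]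
  rw [(OrthonormalBasis.span b.orthonormal s).starProjection_eq_sum_rankOne]
  simp only [_root_.sum_apply, InnerProductSpace.rankOne_apply, OrthonormalBasis.span_apply]
  exact sum_coe_sort s fun i => ⟪b i, x⟫ • b i

theorem sub_starProjection_span_image_apply [DecidableEq ι] [FiniteDimensional ℝ E] (x : E) :
    x - (span ℝ (b '' s)).starProjection x = (span ℝ (b '' ↑sᶜ)).starProjection x := by
  rw [starProjection_span_image_apply, starProjection_span_image_apply, sub_eq_iff_eq_add,
    sum_compl_add_sum, b.sum_repr']

variable {b s}

theorem norm_starProjection_apply_starProjection_le [FiniteDimensional ℝ E]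
    (c : OrthonormalBasis ι ℝ E) (t : Finset ι) {ε : ℝ}
    (h : ∀ i ∈ s, ∀ k ∈ t, |⟪b i, c k⟫| ≤ ε) (x : E) :
    ‖(span ℝ (b '' s)).starProjection ((span ℝ (c '' t)).starProjection x)‖ ≤
      #s * #t * ε * ‖x‖ := by
  have hcoeff : ∀ i ∈ s, |⟪b i, (span ℝ (c '' t)).starProjection x⟫| ≤ #t * ε * ‖x‖ := by
    intro i hi
    rw [starProjection_span_image_apply, inner_sum]
    calc |∑ k ∈ t, ⟪b i, ⟪c k, x⟫ • c k⟫| ≤ ∑ k ∈ t, |⟪b i, ⟪c k, x⟫ • c k⟫| :=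
          abs_sum_le_sum_abs _ _
      _ ≤ ∑ _k ∈ t, ‖x‖ * ε := sum_le_sum fun k hk => by
          rw [real_inner_smul_right, abs_mul]
          refine mul_le_mul ?_ (h i hi k hk) (abs_nonneg _) (norm_nonneg _)
          simpa using abs_real_inner_le_norm (c k) x
      _ = #t * ε * ‖x‖ := by rw [sum_const, nsmul_eq_mul]; ring
  rw [starProjection_span_image_apply]
  calc ‖∑ i ∈ s, ⟪b i, (span ℝ (c '' t)).starProjection x⟫ • b i‖
      ≤ ∑ i ∈ s, ‖⟪b i, (span ℝ (c '' t)).starProjection x⟫ • b i‖ := norm_sum_le _ _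
    _ ≤ ∑ _i ∈ s, #t * ε * ‖x‖ := sum_le_sum fun i hi => by
        simpa [norm_smul] using hcoeff i hi
    _ = #s * #t * ε * ‖x‖ := by rw [sum_const, nsmul_eq_mul]; ring

theorem norm_starProjection_sub_starProjection_le [FiniteDimensional ℝ E]
    (c : OrthonormalBasis ι ℝ E) (t : Finset ι) {ε : ℝ} (hε : 0 ≤ ε)
    (h : ∀ i k, (i ∈ s ↔ k ∉ t) → |⟪b i, c k⟫| ≤ ε) (x : E) :
    ‖(span ℝ (b '' s)).starProjection x - (span ℝ (c '' t)).starProjection x‖ ≤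
      Fintype.card ι ^ 2 * ε * ‖x‖ := by
  classical
  set P := (span ℝ (b '' s)).starProjection
  set Q := (span ℝ (c '' t)).starProjection
  have hdecomp : P x - Q x = P ((span ℝ (c '' ↑tᶜ)).starProjection x) -
      (span ℝ (b '' ↑sᶜ)).starProjection (Q x) := by
    rw [← sub_starProjection_span_image_apply, ← sub_starProjection_span_image_apply, map_sub]
    abel
  have h₁ := norm_starProjection_apply_starProjection_le c tᶜ
    (fun i hi k hk => h i k (iff_of_true hi (mem_compl.mp hk))) x
  have h₂ := norm_starProjection_apply_starProjection_le (b := b) (s := sᶜ) c t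
    (fun i hi k hk => h i k (iff_of_false (mem_compl.mp hi) (not_not.mpr hk))) x
  rw [hdecomp]
  calc _ ≤ _ := norm_sub_le _ _
    _ ≤ #s * #tᶜ * ε * ‖x‖ + #sᶜ * #t * ε * ‖x‖ := add_le_add h₁ h₂
    _ = (#s * #tᶜ + #sᶜ * #t : ℝ) * (ε * ‖x‖) := by ring
    _ ≤ Fintype.card ι ^ 2 * (ε * ‖x‖) := by
      gcongr
      have hs : (#s : ℝ) ≤ Fintype.card ι := mod_cast card_le_univ s
      have ht : (#t : ℝ) ≤ Fintype.card ι := mod_cast card_le_univ t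
      rw [card_compl, card_compl, Nat.cast_sub (card_le_univ s), Nat.cast_sub (card_le_univ t)]
      nlinarith [mul_nonneg (sub_nonneg.2 hs) (sub_nonneg.2 ht), (#s).cast_nonneg (α := ℝ),
        (#t).cast_nonneg (α := ℝ)]
    _ = _ := by ring

section Diagonal

variable {μ ν : ι → ℝ}

theorem inner_apply_eq_mul_inner {f : E →ₗ[ℝ] E} (hf : ∀ i, f (b i) = μ i • b i) (i : ι)
    (x : E) : ⟪b i, f x⟫ = μ i * ⟪b i, x⟫ := by
  classical
  conv_lhs => rw [← b.sum_repr' x]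
  simp [hf, inner_sum, real_inner_smul_right, b.inner_eq_ite, mul_comm]

theorem inner_apply_self_sub_mul_norm_sq {f : E →ₗ[ℝ] E} (hf : ∀ i, f (b i) = μ i • b i)
    (a : ℝ) (x : E) : ⟪f x, x⟫ - a * ‖x‖ ^ 2 = ∑ i, (μ i - a) * ⟪b i, x⟫ ^ 2 := by
  rw [← b.sum_inner_mul_inner (f x) x, ← b.sum_sq_inner_right x, mul_sum, ← sum_sub_distrib]
  refine sum_congr rfl fun i _ => ?_
  rw [real_inner_comm, inner_apply_eq_mul_inner hf]
  ring

theorem inner_apply_self_le_of_mem_span {f : E →ₗ[ℝ] E} (hf : ∀ i, f (b i) = μ i • b i)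
    {a : ℝ} (hμ : ∀ i ∈ s, μ i ≤ a) {x : E} (hx : x ∈ span ℝ (b '' s)) :
    ⟪f x, x⟫ ≤ a * ‖x‖ ^ 2 := by
  rw [← sub_nonpos, inner_apply_self_sub_mul_norm_sq hf]
  refine sum_nonpos fun i _ => ?_
  by_cases hi : i ∈ s
  · exact mul_nonpos_of_nonpos_of_nonneg (sub_nonpos.2 (hμ i hi)) (sq_nonneg _)
  · simp [(b.mem_span_image_iff s).1 hx i hi]

theorem le_inner_apply_self_of_mem_span {f : E →ₗ[ℝ] E} (hf : ∀ i, f (b i) = μ i • b i)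
    {a : ℝ} (hμ : ∀ i ∈ s, a ≤ μ i) {x : E} (hx : x ∈ span ℝ (b '' s)) :
    a * ‖x‖ ^ 2 ≤ ⟪f x, x⟫ := by
  rw [← sub_nonneg, inner_apply_self_sub_mul_norm_sq hf]
  refine sum_nonneg fun i _ => ?_
  by_cases hi : i ∈ s
  · exact mul_nonneg (sub_nonneg.2 (hμ i hi)) (sq_nonneg _)
  · simp [(b.mem_span_image_iff s).1 hx i hi]

theorem iSup_eigenspace_nonneg_eq_span {f : E →ₗ[ℝ] E} (hf : ∀ i, f (b i) = μ i • b i) :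
    ⨆ r : {r : ℝ // 0 ≤ r}, Module.End.eigenspace f r =
      span ℝ (b '' ({i | 0 ≤ μ i} : Finset ι)) := by
  apply le_antisymm
  · refine iSup_le fun r x hx => (b.mem_span_image_iff _).2 fun i hi => ?_
    rw [Module.End.mem_eigenspace_iff] at hx
    have h : (μ i - r) * ⟪b i, x⟫ = 0 := by
      rw [sub_mul, ← inner_apply_eq_mul_inner hf, hx, real_inner_smul_right, sub_self]
    refine (mul_eq_zero.1 h).resolve_left (sub_ne_zero.2 (ne_of_lt ?_))
    exact (by simpa using hi : μ i < 0).trans_le r.2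
  · rw [span_le]
    rintro _ ⟨i, hi, rfl⟩
    exact mem_iSup_of_mem ⟨μ i, by simpa using hi⟩ (Module.End.mem_eigenspace_iff.2 (hf i))

theorem card_le_card_of_norm_sub_lt [FiniteDimensional ℝ E] {f g : E →L[ℝ] E}
    {c : OrthonormalBasis ι ℝ E} (hf : ∀ i, f (b i) = μ i • b i) (hg : ∀ k, g (c k) = ν k • c k)
    {a δ : ℝ} (hfg : ‖g - f‖ < δ) : #{i | μ i ≤ a} ≤ #{k | ν k ≤ a + δ} := by
  classical
  have hdisj : Disjoint (span ℝ (b '' ({i | μ i ≤ a} : Finset ι)))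
      (span ℝ (c '' ↑({k | ν k ≤ a + δ} : Finset ι)ᶜ)) := by
    refine disjoint_def.2 fun x hxU hxW => ?_
    by_contra hx
    have hpos : 0 < ‖x‖ ^ 2 := by positivity
    have hU : ⟪f x, x⟫ ≤ a * ‖x‖ ^ 2 :=
      inner_apply_self_le_of_mem_span (f := (f : E →ₗ[ℝ] E)) hf
        (fun i hi => by simpa using hi) hxU
    have hW : (a + δ) * ‖x‖ ^ 2 ≤ ⟪g x, x⟫ :=
      le_inner_apply_self_of_mem_span (f := (g : E →ₗ[ℝ] E)) hg
        (fun k hk => (by simpa using hk : a + δ < ν k).le) hxW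
    have hgf : ⟪g x, x⟫ - ⟪f x, x⟫ ≤ ‖g - f‖ * ‖x‖ ^ 2 :=
      calc ⟪g x, x⟫ - ⟪f x, x⟫ = ⟪(g - f) x, x⟫ := by
            rw [sub_apply, inner_sub_left]
        _ ≤ ‖(g - f) x‖ * ‖x‖ := real_inner_le_norm _ _
        _ ≤ ‖g - f‖ * ‖x‖ * ‖x‖ := by gcongr; exact (g - f).le_opNorm x
        _ = ‖g - f‖ * ‖x‖ ^ 2 := by ring
    nlinarith
  have h := finrank_add_finrank_le_of_disjoint hdisj
  rw [finrank_span_image, finrank_span_image, card_compl, finrank_eq_card_basis b.toBasis] at h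
  have := card_le_univ ({k | ν k ≤ a + δ} : Finset ι)
  omega

theorem forall_neg_le_of_norm_sub_lt [FiniteDimensional ℝ E] {f g : E →L[ℝ] E}
    {c : OrthonormalBasis ι ℝ E} (hf : ∀ i, f (b i) = μ i • b i) (hg : ∀ k, g (c k) = ν k • c k)
    (hcard : #{i | μ i < 0} = #{k | ν k < 0}) {a δ : ℝ} (hμ : ∀ i, μ i < 0 → μ i ≤ a)
    (hfg : ‖g - f‖ < δ) (haδ : a + δ < 0) : ∀ k, ν k < 0 → ν k ≤ a + δ := by
  have ha : a < 0 := by linarith [norm_nonneg (g - f)]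
  have hsub : ({k | ν k ≤ a + δ} : Finset ι) ⊆ ({k | ν k < 0} : Finset ι) := fun k hk => by
    simp only [mem_filter, mem_univ, true_and] at hk ⊢
    linarith
  have heq : ({k | ν k ≤ a + δ} : Finset ι) = ({k | ν k < 0} : Finset ι) := by
    refine eq_of_subset_of_card_le hsub ?_
    calc #{k | ν k < 0} = #{i | μ i < 0} := hcard.symm
      _ = #{i | μ i ≤ a} :=
          congr_arg card (filter_congr fun i _ => ⟨hμ i, fun h => h.trans_lt ha⟩)
      _ ≤ #{k | ν k ≤ a + δ} := card_le_card_of_norm_sub_lt hf hg hfg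
  intro k hk
  have hk' : k ∈ ({k | ν k ≤ a + δ} : Finset ι) := by rw [heq]; simpa using hk
  simpa using hk'

theorem abs_sub_mul_abs_inner_le {f g : E →L[ℝ] E} {c : OrthonormalBasis ι ℝ E}
    (hf : ∀ i, f (b i) = μ i • b i) (hg : ∀ k, g (c k) = ν k • c k) (i k : ι) :
    |μ i - ν k| * |⟪b i, c k⟫| ≤ ‖f - g‖ := by
  rw [← abs_mul, sub_mul, ← inner_apply_eq_mul_inner (f := (f : E →ₗ[ℝ] E)) hf,
    ← real_inner_smul_right, ← hg, ← inner_sub_right]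
  calc |⟪b i, f (c k) - g (c k)⟫| ≤ ‖b i‖ * ‖(f - g) (c k)‖ := abs_real_inner_le_norm _ _
    _ ≤ ‖f - g‖ := by simpa using (f - g).le_opNorm (c k)

theorem norm_starProjection_nonneg_sub_le [FiniteDimensional ℝ E] {f g : E →L[ℝ] E}
    {c : OrthonormalBasis ι ℝ E} (hf : ∀ i, f (b i) = μ i • b i) (hg : ∀ k, g (c k) = ν k • c k)
    {a : ℝ} (ha : a < 0) (hμ : ∀ i, μ i < 0 → μ i ≤ a) (hν : ∀ k, ν k < 0 → ν k ≤ a) :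
    ‖(span ℝ (b '' ({i | 0 ≤ μ i} : Finset ι))).starProjection -
        (span ℝ (c '' ({k | 0 ≤ ν k} : Finset ι))).starProjection‖ ≤
      Fintype.card ι ^ 2 / (-a) * ‖f - g‖ := by
  have hε : 0 ≤ ‖f - g‖ / (-a) := div_nonneg (norm_nonneg _) (neg_nonneg.2 ha.le)
  refine ContinuousLinearMap.opNorm_le_bound _
    (mul_nonneg (div_nonneg (by positivity) (neg_nonneg.2 ha.le)) (norm_nonneg _)) fun x => ?_
  have hcross : ∀ i k, (i ∈ ({i | 0 ≤ μ i} : Finset ι) ↔ k ∉ ({k | 0 ≤ ν k} : Finset ι)) →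
      |⟪b i, c k⟫| ≤ ‖f - g‖ / (-a) := by
    intro i k hik
    simp only [mem_filter, mem_univ, true_and, not_le] at hik
    have hgap : -a ≤ |μ i - ν k| := by
      by_cases hi : 0 ≤ μ i
      · exact le_abs.2 (Or.inl (by linarith [hν k (hik.1 hi)]))
      · exact le_abs.2 (Or.inr (by linarith [hμ i (not_le.1 hi), hik.2.mt hi]))
    rw [le_div_iff₀ (neg_pos.2 ha), mul_comm]
    exact (mul_le_mul_of_nonneg_right hgap (abs_nonneg _)).trans
      (abs_sub_mul_abs_inner_le hf hg i k)
  calc _ ≤ Fintype.card ι ^ 2 * (‖f - g‖ / (-a)) * ‖x‖ :=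
        norm_starProjection_sub_starProjection_le c _ hε hcross x
    _ = _ := by ring

end Diagonal

end OrthonormalBasis

open OrthonormalBasis

theorem opIndex_eq_card {ℓ : ℕ} {ι : Type*} [Fintype ι]
    {f : EuclideanSpace ℝ (Fin (ℓ + 1)) →L[ℝ] EuclideanSpace ℝ (Fin (ℓ + 1))}
    {b : OrthonormalBasis ι ℝ (EuclideanSpace ℝ (Fin (ℓ + 1)))} {μ : ι → ℝ}
    (hf : ∀ i, f (b i) = μ i • b i) : opIndex f = #{i | μ i < 0} := by
  classical
  set S := {d | ∃ L : Submodule ℝ (EuclideanSpace ℝ (Fin (ℓ + 1))),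
    finrank ℝ L = d ∧ ∀ y ∈ L, y ≠ 0 → ⟪f y, y⟫ < 0}
  have hmem : #{i | μ i < 0} ∈ S := by
    refine ⟨_, b.finrank_span_image _, fun y hy hy0 => ?_⟩
    obtain ⟨a, ha, hμ⟩ := exists_neg_forall_le_of_neg μ
    calc ⟪f y, y⟫ ≤ a * ‖y‖ ^ 2 :=
          b.inner_apply_self_le_of_mem_span (f := (f : _ →ₗ[ℝ] _)) hf
            (fun i hi => hμ i (by simpa using hi)) hy
      _ < 0 := mul_neg_of_neg_of_pos ha (by positivity)
  have hbound : ∀ d ∈ S, d ≤ #{i | μ i < 0} := by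
    rintro _ ⟨L, rfl, hL⟩
    have hdisj : Disjoint L (span ℝ (b '' ↑({i | μ i < 0} : Finset ι)ᶜ)) := by
      refine disjoint_def.2 fun x hxL hxW => by_contra fun hx => (hL x hxL hx).not_ge ?_
      simpa using b.le_inner_apply_self_of_mem_span (f := (f : _ →ₗ[ℝ] _)) (a := 0) hf
        (fun i hi => by simpa using hi) hxW
    have h := finrank_add_finrank_le_of_disjoint hdisj
    rw [finrank_span_image, card_compl, finrank_eq_card_basis b.toBasis] at h
    have := card_le_univ ({i | μ i < 0} : Finset ι)
    omega
  exact le_antisymm (csSup_le ⟨_, hmem⟩ hbound) (le_csSup ⟨_, hbound⟩ hmem)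

theorem Lplus_continuous_into_grassmannian_general {T : Type*} [TopologicalSpace T] (ℓ j : ℕ)
    (A : T → EuclideanSpace ℝ (Fin (ℓ + 1)) →L[ℝ] EuclideanSpace ℝ (Fin (ℓ + 1)))
    (hcont : Continuous A)
    (hsym : ∀ t x y, ⟪A t x, y⟫ = ⟪x, A t y⟫)
    (hindex : ∀ t, opIndex (A t) = j)
    (Lplus : T → Submodule ℝ (EuclideanSpace ℝ (Fin (ℓ + 1))))
    (hL : ∀ t, Lplus t = ⨆ μ : {μ : ℝ // 0 ≤ μ},
      Module.End.eigenspace (↑(A t) : EuclideanSpace ℝ (Fin (ℓ + 1)) →ₗ[ℝ]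
        EuclideanSpace ℝ (Fin (ℓ + 1))) (μ : ℝ)) :
    (∀ t, Module.finrank ℝ (Lplus t) = ℓ + 1 - j) ∧
    Continuous fun t => (Lplus t).subtypeL.comp (Lplus t).orthogonalProjectionOnto := by
  have hn : finrank ℝ (EuclideanSpace ℝ (Fin (ℓ + 1))) = ℓ + 1 := finrank_euclideanSpace_fin
  have hA : ∀ t, (A t : EuclideanSpace ℝ (Fin (ℓ + 1)) →ₗ[ℝ] _).IsSymmetric := hsym
  set b := fun t => (hA t).eigenvectorBasis hn
  set μ := fun t => (hA t).eigenvalues hn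
  have hb : ∀ t i, A t (b t i) = μ t i • b t i := fun t => (hA t).apply_eigenvectorBasis hn
  obtain rfl : Lplus = fun t => span ℝ (b t '' ({i | 0 ≤ μ t i} : Finset _)) :=
    funext fun t => (hL t).trans (iSup_eigenspace_nonneg_eq_span (hb t))
  have hneg : ∀ t, #{i | μ t i < 0} = j := fun t =>
    (opIndex_eq_card (hb t)).symm.trans (hindex t)
  refine ⟨fun t => ?_, continuous_iff_continuousAt.2 fun t₀ => ?_⟩
  · have h := card_filter_add_card_filter_not (s := univ) fun i => μ t i < 0
    simp only [not_lt, card_univ, Fintype.card_fin, hneg t] at h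
    rw [finrank_span_image]
    omega
  set P := fun t => (span ℝ (b t '' ({i | 0 ≤ μ t i} : Finset _))).starProjection
  have hA₀ := tendsto_iff_norm_sub_tendsto_zero.1 (hcont.tendsto t₀)
  obtain ⟨a, ha, hμ⟩ := exists_neg_forall_le_of_neg (μ t₀)
  have hbound : ∀ᶠ t in nhds t₀,
      ‖P t - P t₀‖ ≤ Fintype.card (Fin (ℓ + 1)) ^ 2 / (-(a / 2)) * ‖A t - A t₀‖ := by
    filter_upwards [hA₀.eventually_lt_const (by linarith : 0 < -a / 2)] with t ht
    have hν := forall_neg_le_of_norm_sub_lt (hb t₀) (hb t) ((hneg t₀).trans (hneg t).symm) hμ ht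
      (by linarith)
    exact norm_starProjection_nonneg_sub_le (hb t) (hb t₀) (by linarith)
      (fun k hk => (hν k hk).trans_eq (by ring)) fun i hi => (hμ i hi).trans (by linarith)
  rw [ContinuousAt, tendsto_iff_norm_sub_tendsto_zero]
  refine squeeze_zero' (Filter.Eventually.of_forall fun t => norm_nonneg _) hbound ?_
  simpa using hA₀.const_mul _

/-- Let `Q_t` be a continuous family of quadratic forms on `ℝ^(ℓ+1)`
(given by a continuous family of self-adjoint operators `A t`), parametrized by a topological
space `T`, with `index (Q_t) = j` for all `t`.  Then `t ↦ L⁺(Q_t)`, the sum of the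
eigenspaces with nonnegative eigenvalues, is a continuous family of `(ℓ+1-j)`-dimensional
subspaces: it has constant dimension `ℓ + 1 - j` and the corresponding family of orthogonal
projections of `ℝ^(ℓ+1)` (which embeds the Grassmannian `Gr(ℓ+1-j, ℓ+1)` in the space of
operators) depends continuously on `t`. -/
theorem Lplus_continuous_into_grassmannian {T : Type*} [TopologicalSpace T] (ℓ j : ℕ)
    (hj : j ≤ ℓ + 1)
    (A : T → EuclideanSpace ℝ (Fin (ℓ + 1)) →L[ℝ] EuclideanSpace ℝ (Fin (ℓ + 1)))
    (hcont : Continuous A)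
    (hsym : ∀ t x y, ⟪A t x, y⟫ = ⟪x, A t y⟫)
    (hindex : ∀ t, opIndex (A t) = j)
    (Lplus : T → Submodule ℝ (EuclideanSpace ℝ (Fin (ℓ + 1))))
    (hL : ∀ t, Lplus t = ⨆ μ : {μ : ℝ // 0 ≤ μ},
      Module.End.eigenspace (↑(A t) : EuclideanSpace ℝ (Fin (ℓ + 1)) →ₗ[ℝ]
        EuclideanSpace ℝ (Fin (ℓ + 1))) (μ : ℝ)) :
    (∀ t, Module.finrank ℝ (Lplus t) = ℓ + 1 - j) ∧
    Continuous fun t => (Lplus t).subtypeL.comp (Lplus t).orthogonalProjectionOnto :=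
  Lplus_continuous_into_grassmannian_general ℓ j A hcont hsym hindex Lplus hL

end
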